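/- For states in the symmetric subspace the realignment criterion coincides with the PPT criterion: if a bipartite matrix ρ on ℂ^d ⊗ ℂ^d satisfies F ρ = ρ and ρ F = ρ, where F is the swap operator, then ‖R(ρ)‖_tr = ‖ρ^{T₂}‖_tr. -/

import Mathlib

open Matrix Kronecker ComplexOrder

/-- Trace norm `‖X‖_tr = Tr √(X Xᴴ)`. -/
noncomputable def traceNorm {m n : Type*} [Fintype m] [Fintype n] [DecidableEq m]
    (X : Matrix m n ℂ) : ℝ :=
  (((Matrix.posSemidef_self_mul_conjTranspose X).1.eigenvectorUnitary.1 *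
      diagonal (((↑) : ℝ → ℂ) ∘ (√·) ∘ (Matrix.posSemidef_self_mul_conjTranspose X).1.eigenvalues) *
      (star (Matrix.posSemidef_self_mul_conjTranspose X).1.eigenvectorUnitary : Matrix m m ℂ)).trace).re

/-- A density matrix: positive semidefinite with trace 1. -/
def IsDensityMatrix {n : Type*} [Fintype n] (ρ : Matrix n n ℂ) : Prop :=
  ρ.PosSemidef ∧ ρ.trace = 1

/-- The realignment map: `R(ρ)_{(i,j),(k,l)} = ρ_{(i,k),(j,l)}`. -/
def realign {dA dB : ℕ} (ρ : Matrix (Fin dA × Fin dB) (Fin dA × Fin dB) ℂ) :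
    Matrix (Fin dA × Fin dA) (Fin dB × Fin dB) ℂ :=
  fun p q => ρ (p.1, q.1) (p.2, q.2)

/-- Partial transpose on the second subsystem: `(ρ^{T₂})_{(i,k),(j,l)} = ρ_{(i,l),(j,k)}`. -/
def ptranspose2 {d : ℕ} (ρ : Matrix (Fin d × Fin d) (Fin d × Fin d) ℂ) :
    Matrix (Fin d × Fin d) (Fin d × Fin d) ℂ :=
  fun p q => ρ (p.1, q.2) (q.1, p.2)

/-- The swap (exchange) operator `F_{(i,k),(j,l)} = δ_{il} δ_{kj}`. -/
def swapOp (d : ℕ) : Matrix (Fin d × Fin d) (Fin d × Fin d) ℂ :=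
  fun p q => if p.1 = q.2 ∧ p.2 = q.1 then 1 else 0

/-- The unnormalized maximally entangled projector `(|Ω⟩⟨Ω|)_{(i,k),(j,l)} = δ_{ik} δ_{jl}`. -/
def omegaProj (d : ℕ) : Matrix (Fin d × Fin d) (Fin d × Fin d) ℂ :=
  fun p q => if p.1 = p.2 ∧ q.1 = q.2 then 1 else 0

/-- Separability: `ρ` is a finite convex combination of products of density matrices. -/
def IsSeparableState {dA dB : ℕ} (ρ : Matrix (Fin dA × Fin dB) (Fin dA × Fin dB) ℂ) : Prop :=
  ∃ (m : ℕ) (p : Fin m → ℝ) (σ : Fin m → Matrix (Fin dA) (Fin dA) ℂ)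
    (τ : Fin m → Matrix (Fin dB) (Fin dB) ℂ),
    (∀ k, 0 ≤ p k) ∧ (∑ k, p k = 1) ∧ (∀ k, IsDensityMatrix (σ k)) ∧
    (∀ k, IsDensityMatrix (τ k)) ∧ ρ = ∑ k, (p k : ℂ) • (σ k ⊗ₖ τ k)

/-! Realigning `ρ F` gives `ρ^{T₂} F` for every `ρ`, so on the symmetric subspace
`R(ρ) = ρ^{T₂} F`. As `F` is unitary, `R(ρ) R(ρ)ᴴ = ρ^{T₂} (ρ^{T₂})ᴴ`, and the trace norm of `X`
depends only on `X Xᴴ`. -/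

theorem traceNorm_eq_re_trace_cfc_sqrt {m n : Type*} [Fintype m] [Fintype n] [DecidableEq m]
    (X : Matrix m n ℂ) : traceNorm X = (cfc Real.sqrt (X * Xᴴ)).trace.re := by
  rw [(posSemidef_self_mul_conjTranspose X).1.cfc_eq, IsHermitian.cfc,
    Unitary.conjStarAlgAut_apply]
  rfl

theorem traceNorm_mul_unitary {m n : Type*} [Fintype m] [Fintype n] [DecidableEq m]
    [DecidableEq n] (X : Matrix m n ℂ) {U : Matrix n n ℂ} (hU : U ∈ unitaryGroup n ℂ) :
    traceNorm (X * U) = traceNorm X := by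
  have : X * U * (X * U)ᴴ = X * Xᴴ := by
    rw [conjTranspose_mul, Matrix.mul_assoc, ← Matrix.mul_assoc U, ← star_eq_conjTranspose,
      mem_unitaryGroup_iff.mp hU, Matrix.one_mul]
  rw [traceNorm_eq_re_trace_cfc_sqrt, this, traceNorm_eq_re_trace_cfc_sqrt]

section swapOp

variable {d : ℕ}

theorem mul_swapOp_apply (X : Matrix (Fin d × Fin d) (Fin d × Fin d) ℂ) (p q : Fin d × Fin d) :
    (X * swapOp d) p q = X p q.swap := by
  simp [mul_apply, swapOp, ite_and, Fintype.sum_prod_type, Prod.swap]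

theorem conjTranspose_swapOp : (swapOp d)ᴴ = swapOp d := by
  ext p q
  simp [swapOp, and_comm, eq_comm]

theorem swapOp_mul_swapOp : swapOp d * swapOp d = 1 := by
  ext p q
  simp [mul_swapOp_apply, swapOp, one_apply, Prod.ext_iff]

theorem swapOp_mem_unitaryGroup : swapOp d ∈ unitaryGroup (Fin d × Fin d) ℂ := by
  rw [mem_unitaryGroup_iff, star_eq_conjTranspose, conjTranspose_swapOp, swapOp_mul_swapOp]

theorem realign_mul_swapOp (ρ : Matrix (Fin d × Fin d) (Fin d × Fin d) ℂ) :
    realign (ρ * swapOp d) = ptranspose2 ρ * swapOp d := by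
  ext p q
  simp [realign, ptranspose2, mul_swapOp_apply]

end swapOp

theorem realign_eq_ppt_on_symmetric_subspace_general {d : ℕ}
    (ρ : Matrix (Fin d × Fin d) (Fin d × Fin d) ℂ)
    (h2 : ρ * swapOp d = ρ) :
    traceNorm (realign ρ) = traceNorm (ptranspose2 ρ) := by
  calc traceNorm (realign ρ) = traceNorm (realign (ρ * swapOp d)) := by rw [h2]
    _ = traceNorm (ptranspose2 ρ * swapOp d) := by rw [realign_mul_swapOp]
    _ = traceNorm (ptranspose2 ρ) := traceNorm_mul_unitary _ swapOp_mem_unitaryGroup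

/-- For states in the symmetric subspace (`F ρ = ρ F = ρ`), the realignment criterion
coincides with the PPT criterion: `‖R(ρ)‖_tr = ‖ρ^{T₂}‖_tr`. -/
theorem realign_eq_ppt_on_symmetric_subspace {d : ℕ}
    (ρ : Matrix (Fin d × Fin d) (Fin d × Fin d) ℂ)
    (h1 : swapOp d * ρ = ρ) (h2 : ρ * swapOp d = ρ) :
    traceNorm (realign ρ) = traceNorm (ptranspose2 ρ) :=
  realign_eq_ppt_on_symmetric_subspace_general ρ h2
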